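/- arXiv:1903.10724 — 2 statements merged into one kernel-verified Lean document; each statement's English description precedes it below -/
import Mathlib

section
/- Let X be a set with ternary operation [ ] satisfying LN and RN. Define ∂ₙ = Σ_{i=0}^{n} (−1)ⁱ (dᵢⁿ'ᴸ − dᵢⁿ'ᴿ) on Cₙ = R⟨X^{n+2}⟩. Then ∂ₙ₋₁ ∘ ∂ₙ = 0. -/
universe u
variable {X : Type u}

open Fin.NatCast in
/-- Substitution: replace the `i`-th entry `xᵢ` of the tuple by `[xᵢ₋₁ xᵢ xᵢ₊₁]`. -/
def subst (t : X → X → X → X) (n i : ℕ) (x : Fin (n + 2) → X) : Fin (n + 2) → X :=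
  Function.update x (i : Fin (n + 2))
    (t (x ((i : Fin (n + 2)) - 1)) (x (i : Fin (n + 2))) (x ((i : Fin (n + 2)) + 1)))

/-- Left face maps `dᵢⁿ'ᴸ` on tuples. -/
def dL (t : X → X → X → X) (n : ℕ) : ℕ → (Fin (n + 2) → X) → (Fin (n + 1) → X)
  | 0, x => fun j => x j.succ
  | i + 1, x => dL t n i (subst t n (i + 1) x)

/-- Auxiliary for right face maps: `dRa t n m = d_{n-m}ⁿ'ᴿ`. -/
def dRa (t : X → X → X → X) (n : ℕ) : ℕ → (Fin (n + 2) → X) → (Fin (n + 1) → X)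
  | 0, x => fun j => x j.castSucc
  | m + 1, x => dRa t n m (subst t n (n - m) x)

/-- Right face maps `dᵢⁿ'ᴿ` on tuples. -/
def dR (t : X → X → X → X) (n i : ℕ) : (Fin (n + 2) → X) → (Fin (n + 1) → X) :=
  dRa t n (n - i)

/-- Left face maps on the free module `Cₙ = R⟨X^{n+2}⟩`. -/
noncomputable def dLhat (R : Type*) [CommRing R] (t : X → X → X → X) (n i : ℕ) :
    ((Fin (n + 2) → X) →₀ R) →ₗ[R] ((Fin (n + 1) → X) →₀ R) :=
  Finsupp.lmapDomain R R (dL t n i)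

/-- Right face maps on the free module `Cₙ = R⟨X^{n+2}⟩`. -/
noncomputable def dRhat (R : Type*) [CommRing R] (t : X → X → X → X) (n i : ℕ) :
    ((Fin (n + 2) → X) →₀ R) →ₗ[R] ((Fin (n + 1) → X) →₀ R) :=
  Finsupp.lmapDomain R R (dR t n i)

/-!
Tuples are read as sequences `ℕ → X`. There the left face is a scan from the right,
`leftFace (i + 1) x = [x₀ x₁ y₀] :: y` with `y = leftFace i (tail x)`, while the right face keeps a
prefix and then runs the chain `z_{p+1} = [z_p x_{p+1} x_{p+2}]` (`rightChain`). The identities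
`d^α_i ∘ d^β_{j+1} = d^β_j ∘ d^α_i` (`i ≤ j`) follow by induction on `i`. Peeling off the common
prefix leaves: for `L ∘ L`, one application of LN and RN at the head of the sequence; for `R ∘ L`,
that the `p`-th entry of both sides is `[z_p x_{p+1} w_{p+1}]` with `w = leftFace (j + 1) x`; for
`R ∘ R`, the chain identity `rightChain a (rightChain b s) = rightChain a (rightChain [a b s₀] s)`.
`L ∘ R` is formal. The identities make the terms `(i, j + 1)` and `(j, i)` of `∂ ∘ ∂` cancel.
-/

open Finset in
theorem alternating_sum_comp_alternating_sum_eq_zero {R M N P : Type*} [CommRing R]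
    [AddCommGroup M] [AddCommGroup N] [AddCommGroup P] [Module R M] [Module R N] [Module R P]
    (f : ℕ → N →ₗ[R] P) (g : ℕ → M →ₗ[R] N) (n : ℕ)
    (h : ∀ i j, i ≤ j → j ≤ n → (f i).comp (g (j + 1)) = (f j).comp (g i)) :
    (∑ i ∈ range (n + 1), (-1 : R) ^ i • f i).comp
      (∑ j ∈ range (n + 2), (-1 : R) ^ j • g j) = 0 := by
  set c : ℕ → ℕ → M →ₗ[R] P := fun i j => (-1 : R) ^ (i + j) • (f i).comp (g j)
  have expand : (∑ i ∈ range (n + 1), (-1 : R) ^ i • f i).comp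
      (∑ j ∈ range (n + 2), (-1 : R) ^ j • g j) =
        ∑ i ∈ range (n + 1), ∑ j ∈ range (n + 2), c i j := by
    ext v
    simp [c, map_sum, smul_sum, pow_add, mul_smul]
  have upper (i : ℕ) : ∑ j ∈ Ico (i + 1) (n + 2), c i j = -∑ j ∈ Ico i (n + 1), c j i := by
    rw [← sum_Ico_add', ← sum_neg_distrib]
    refine sum_congr rfl fun j hj => ?_
    rw [mem_Ico] at hj
    simp only [c, h i j hj.1 (by omega), pow_succ, add_comm j i, ← add_assoc, mul_neg_one,
      neg_smul]
  have swap : ∑ i ∈ range (n + 1), ∑ j ∈ Ico i (n + 1), c j i =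
      ∑ j ∈ range (n + 1), ∑ i ∈ range (j + 1), c j i :=
    sum_comm' fun i j => by simp only [mem_range, mem_Ico]; omega
  rw [expand]
  calc ∑ i ∈ range (n + 1), ∑ j ∈ range (n + 2), c i j
      = ∑ i ∈ range (n + 1), (∑ j ∈ range (i + 1), c i j + ∑ j ∈ Ico (i + 1) (n + 2), c i j) :=
        sum_congr rfl fun i hi => (sum_range_add_sum_Ico _ (by rw [mem_range] at hi; omega)).symm
    _ = 0 := by
        rw [sum_add_distrib, sum_congr rfl fun i _ => upper i, sum_neg_distrib, swap,
          add_neg_cancel]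

def LeftNormal (t : X → X → X → X) : Prop :=
  ∀ a b c d, t a b (t b c d) = t a (t a b c) (t (t a b c) c d)

def RightNormal (t : X → X → X → X) : Prop :=
  ∀ a b c d, t (t a b c) c d = t (t a b (t b c d)) (t b c d) d

section Sequences

variable (t : X → X → X → X)

def leftFace : ℕ → (ℕ → X) → ℕ → X
  | 0, x, p => x (p + 1)
  | i + 1, x, 0 => t (x 0) (x 1) (leftFace i (fun q => x (q + 1)) 0)
  | i + 1, x, p + 1 => leftFace i (fun q => x (q + 1)) p

def rightChain (a : X) (s : ℕ → X) : ℕ → X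
  | 0 => a
  | p + 1 => t (rightChain a s p) (s p) (s (p + 1))

def rightFace : ℕ → (ℕ → X) → ℕ → X
  | 0, x, p => rightChain t (x 0) (fun q => x (q + 1)) p
  | _ + 1, x, 0 => x 0
  | i + 1, x, p + 1 => rightFace i (fun q => x (q + 1)) p

-- the paper's substitution at position `k + 1`, indexed so that no `k - 1` occurs
def substAt (k : ℕ) (x : ℕ → X) : ℕ → X :=
  Function.update x (k + 1) (t (x k) (x (k + 1)) (x (k + 2)))

variable {t}

theorem leftFace_of_le {i p : ℕ} (x : ℕ → X) (h : i ≤ p) : leftFace t i x p = x (p + 1) := by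
  induction i generalizing x p with
  | zero => rfl
  | succ i ih =>
    obtain ⟨p, rfl⟩ : ∃ q, p = q + 1 := ⟨p - 1, by omega⟩
    exact ih _ (by omega)

theorem leftFace_of_lt {i p : ℕ} (x : ℕ → X) (h : p < i) :
    leftFace t i x p = t (x p) (x (p + 1)) (leftFace t i x (p + 1)) := by
  induction i generalizing x p with
  | zero => omega
  | succ i ih =>
    cases p with
    | zero => rfl
    | succ p => exact ih _ (by omega)

theorem rightFace_of_le {i p : ℕ} (x : ℕ → X) (h : p ≤ i) : rightFace t i x p = x p := by
  induction i generalizing x p with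
  | zero =>
    obtain rfl : p = 0 := Nat.le_zero.mp h
    rfl
  | succ i ih =>
    cases p with
    | zero => rfl
    | succ p => exact ih _ (by omega)

theorem rightChain_succ (a : X) (s : ℕ → X) (p : ℕ) :
    rightChain t a s (p + 1) = rightChain t (t a (s 0) (s 1)) (fun q => s (q + 1)) p := by
  induction p with
  | zero => rfl
  | succ p ih => rw [rightChain, ih]; rfl

theorem rightChain_shift (a : X) (s : ℕ → X) :
    (fun q => rightChain t a s (q + 1)) = rightChain t (t a (s 0) (s 1)) (fun q => s (q + 1)) :=
  funext (rightChain_succ a s)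

theorem substAt_succ_shift (k : ℕ) (x : ℕ → X) :
    (fun q => substAt t (k + 1) x (q + 1)) = substAt t k (fun q => x (q + 1)) := by
  funext q
  simp only [substAt, Function.update_apply, add_left_inj]

theorem leftFace_substAt (i : ℕ) (x : ℕ → X) :
    leftFace t i (substAt t i x) = leftFace t (i + 1) x := by
  induction i generalizing x with
  | zero =>
    funext p
    cases p <;> rfl
  | succ i ih =>
    funext p
    cases p with
    | zero =>
      simp only [leftFace, substAt_succ_shift, ih]
      rfl
    | succ p => simp only [leftFace, substAt_succ_shift, ih]

theorem rightFace_substAt (k : ℕ) (x : ℕ → X) :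
    rightFace t (k + 1) (substAt t k x) = rightFace t k x := by
  induction k generalizing x with
  | zero =>
    funext p
    cases p with
    | zero => rfl
    | succ p => exact (rightChain_succ (x 0) (fun q => x (q + 1)) p).symm
  | succ k ih =>
    funext p
    cases p with
    | zero => rfl
    | succ p => exact congrFun (substAt_succ_shift k x ▸ ih (fun q => x (q + 1))) p

theorem rightFace_apply_zero (i : ℕ) (x : ℕ → X) : rightFace t i x 0 = x 0 :=
  rightFace_of_le x (Nat.zero_le i)

theorem leftFace_succ_apply_zero (hLN : LeftNormal t) {i j : ℕ} (hij : i ≤ j) (x : ℕ → X) :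
    leftFace t (j + 1) x 0 = t (x 0) (leftFace t i x 0) (leftFace t j (leftFace t i x) 0) := by
  induction i generalizing j x with
  | zero => rfl
  | succ i ih =>
    obtain ⟨j, rfl⟩ : ∃ k, j = k + 1 := ⟨j - 1, by omega⟩
    show t (x 0) (x 1) (leftFace t (j + 1) (fun q => x (q + 1)) 0) = _
    rw [ih (Nat.le_of_succ_le_succ hij)]
    exact hLN _ _ _ _

theorem leftFace_leftFace (hLN : LeftNormal t) (hRN : RightNormal t) {i j : ℕ} (hij : i ≤ j)
    (x : ℕ → X) : leftFace t i (leftFace t (j + 1) x) = leftFace t j (leftFace t i x) := by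
  induction i generalizing j x with
  | zero => rfl
  | succ i ih =>
    obtain ⟨j, rfl⟩ : ∃ k, j = k + 1 := ⟨j - 1, by omega⟩
    have htail := ih (Nat.le_of_succ_le_succ hij) (fun q => x (q + 1))
    funext p
    cases p with
    | zero =>
      show t (t (x 0) (x 1) (leftFace t (j + 1) (fun q => x (q + 1)) 0))
          (leftFace t (j + 1) (fun q => x (q + 1)) 0)
          (leftFace t i (leftFace t (j + 1) (fun q => x (q + 1))) 0) =
        t (t (x 0) (x 1) (leftFace t i (fun q => x (q + 1)) 0))
          (leftFace t i (fun q => x (q + 1)) 0) (leftFace t j (leftFace t i (fun q => x (q + 1))) 0)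
      rw [htail, leftFace_succ_apply_zero hLN (show i ≤ j by omega)]
      exact (hRN _ _ _ _).symm
    | succ p => exact congrFun htail p

theorem leftFace_rightFace {i j : ℕ} (hij : i ≤ j) (x : ℕ → X) :
    leftFace t i (rightFace t (j + 1) x) = rightFace t j (leftFace t i x) := by
  induction i generalizing j x with
  | zero => rfl
  | succ i ih =>
    obtain ⟨j, rfl⟩ : ∃ k, j = k + 1 := ⟨j - 1, by omega⟩
    have htail := ih (Nat.le_of_succ_le_succ hij) (fun q => x (q + 1))
    funext p
    cases p with
    | zero =>
      show t (x 0) (rightFace t (j + 1) (fun q => x (q + 1)) 0)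
          (leftFace t i (rightFace t (j + 1) (fun q => x (q + 1))) 0) = _
      rw [htail, rightFace_apply_zero, rightFace_apply_zero]
      rfl
    | succ p => exact congrFun htail p

theorem rightFace_zero_leftFace_apply (hRN : RightNormal t) (j : ℕ) (x : ℕ → X) (p : ℕ) :
    rightFace t 0 (leftFace t (j + 1) x) p =
      t (rightFace t 0 x p) (x (p + 1)) (leftFace t (j + 1) x (p + 1)) := by
  induction p with
  | zero => rfl
  | succ p ih =>
    show t (rightFace t 0 (leftFace t (j + 1) x) p) (leftFace t (j + 1) x (p + 1))
        (leftFace t (j + 1) x (p + 2)) = t (t (rightFace t 0 x p) (x (p + 1)) (x (p + 2))) _ _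
    rw [ih]
    rcases Nat.lt_or_ge p j with hp | hp
    · rw [leftFace_of_lt x (show p + 1 < j + 1 by omega)]
      exact (hRN _ _ _ _).symm
    · rw [leftFace_of_le x (show j + 1 ≤ p + 1 by omega),
        leftFace_of_le x (show j + 1 ≤ p + 2 by omega)]

theorem leftFace_rightFace_zero_apply (hLN : LeftNormal t) (j : ℕ) (x : ℕ → X) (p : ℕ) :
    leftFace t j (rightFace t 0 x) p =
      t (rightFace t 0 x p) (x (p + 1)) (leftFace t (j + 1) x (p + 1)) := by
  -- downward induction on `p`, starting from `j ≤ p` where both sides are explicit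
  suffices ∀ m p, j ≤ p + m → leftFace t j (rightFace t 0 x) p =
      t (rightFace t 0 x p) (x (p + 1)) (leftFace t (j + 1) x (p + 1)) from
    this j p (by omega)
  intro m
  induction m with
  | zero =>
    intro p hp
    rw [leftFace_of_le _ (by omega), leftFace_of_le x (show j + 1 ≤ p + 1 by omega)]
    rfl
  | succ m ih =>
    intro p hp
    rcases Nat.lt_or_ge p j with hpj | hpj
    · rw [leftFace_of_lt _ hpj, ih (p + 1) (by omega),
        leftFace_of_lt x (show p + 1 < j + 1 by omega)]
      exact (hLN _ _ _ _).symm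
    · exact ih p (by omega)

theorem rightFace_zero_leftFace (hLN : LeftNormal t) (hRN : RightNormal t) (j : ℕ)
    (x : ℕ → X) : rightFace t 0 (leftFace t (j + 1) x) = leftFace t j (rightFace t 0 x) := by
  funext p
  rw [rightFace_zero_leftFace_apply hRN, leftFace_rightFace_zero_apply hLN]

theorem rightFace_leftFace (hLN : LeftNormal t) (hRN : RightNormal t) {i j : ℕ} (hij : i ≤ j)
    (x : ℕ → X) : rightFace t i (leftFace t (j + 1) x) = leftFace t j (rightFace t i x) := by
  induction i generalizing j x with
  | zero => exact rightFace_zero_leftFace hLN hRN j x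
  | succ i ih =>
    obtain ⟨j, rfl⟩ : ∃ k, j = k + 1 := ⟨j - 1, by omega⟩
    have htail := ih (Nat.le_of_succ_le_succ hij) (fun q => x (q + 1))
    funext p
    cases p with
    | zero =>
      show leftFace t (j + 2) x 0 = t (x 0) (rightFace t i (fun q => x (q + 1)) 0)
          (leftFace t j (rightFace t i (fun q => x (q + 1))) 0)
      rw [← htail, rightFace_apply_zero, rightFace_apply_zero]
      rfl
    | succ p => exact congrFun htail p

theorem rightChain_rightChain (hLN : LeftNormal t) (hRN : RightNormal t) (a b : X) (s : ℕ → X) :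
    rightChain t a (rightChain t b s) = rightChain t a (rightChain t (t a b (s 0)) s) := by
  have key : ∀ p, rightChain t a (rightChain t b s) p =
        rightChain t a (rightChain t (t a b (s 0)) s) p ∧
      rightChain t (t a b (s 0)) s p =
        t (rightChain t a (rightChain t b s) p) (rightChain t b s p) (s p) := by
    intro p
    induction p with
    | zero => exact ⟨rfl, rfl⟩
    | succ p ih =>
      obtain ⟨h₁, h₂⟩ := ih
      constructor
      · change t _ _ (t _ _ _) = t _ _ (t _ _ _)
        rw [hLN, ← h₁, ← h₂]
      · change t _ _ _ = t (t _ _ (t _ _ _)) (t _ _ _) _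
        rw [h₂, hRN]
  funext p
  exact (key p).1

theorem rightChain_rightFace (hLN : LeftNormal t) (hRN : RightNormal t) (j : ℕ) (a : X)
    (s : ℕ → X) : rightChain t a (rightFace t j s) = rightFace t j (rightChain t a s) := by
  induction j generalizing a s with
  | zero =>
    show rightChain t a (rightChain t (s 0) _) =
      rightChain t a (fun q => rightChain t a s (q + 1))
    rw [rightChain_rightChain hLN hRN, rightChain_shift]
  | succ j ih =>
    funext p
    cases p with
    | zero => rfl
    | succ p =>
      rw [rightChain_succ]
      show rightChain t (t a (s 0) (rightFace t j (fun q => s (q + 1)) 0))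
          (rightFace t j (fun q => s (q + 1))) p =
        rightFace t j (fun q => rightChain t a s (q + 1)) p
      rw [rightFace_apply_zero, ih, rightChain_shift]

theorem rightFace_rightFace (hLN : LeftNormal t) (hRN : RightNormal t) {i j : ℕ} (hij : i ≤ j)
    (x : ℕ → X) : rightFace t i (rightFace t (j + 1) x) = rightFace t j (rightFace t i x) := by
  induction i generalizing j x with
  | zero => exact rightChain_rightFace hLN hRN j (x 0) _
  | succ i ih =>
    obtain ⟨j, rfl⟩ : ∃ k, j = k + 1 := ⟨j - 1, by omega⟩
    have htail := ih (Nat.le_of_succ_le_succ hij) (fun q => x (q + 1))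
    funext p
    cases p with
    | zero => rfl
    | succ p => exact congrFun htail p

end Sequences

section Tuples

variable {t : X → X → X → X}

open Fin.NatCast in
theorem subst_restrict {n k : ℕ} (hk : k + 1 ≤ n) (s : ℕ → X) :
    subst t n (k + 1) (s ∘ Fin.val) = substAt t k s ∘ Fin.val := by
  funext q
  have h₁ : (((k + 1 : ℕ) : Fin (n + 2)) : ℕ) = k + 1 := Fin.val_cast_of_lt (by omega)
  simp only [subst, substAt, Function.comp_apply, Function.update_apply, Fin.ext_iff, h₁]
  split_ifs
  · congr 2 <;> simp [Fin.val_add, Nat.mod_eq_of_lt] <;> omega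
  · rfl

theorem dL_restrict {n i : ℕ} (hi : i ≤ n) (s : ℕ → X) :
    dL t n i (s ∘ Fin.val) = leftFace t i s ∘ Fin.val := by
  induction i generalizing s with
  | zero => rfl
  | succ i ih =>
    rw [dL, subst_restrict hi, ih (by omega), leftFace_substAt]

theorem dRa_restrict {n m : ℕ} (hm : m ≤ n) (s : ℕ → X) :
    dRa t n m (s ∘ Fin.val) = rightFace t (n - m) s ∘ Fin.val := by
  induction m generalizing s with
  | zero =>
    funext q
    exact (rightFace_of_le (p := q) s (by omega)).symm
  | succ m ih =>
    obtain ⟨k, hk⟩ : ∃ k, n - m = k + 1 := ⟨n - m - 1, by omega⟩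
    rw [dRa, hk, subst_restrict (by omega), ih (by omega), hk, rightFace_substAt,
      show n - (m + 1) = k by omega]

theorem dR_restrict {n i : ℕ} (hi : i ≤ n) (s : ℕ → X) :
    dR t n i (s ∘ Fin.val) = rightFace t i s ∘ Fin.val := by
  rw [dR, dRa_restrict (Nat.sub_le n i), Nat.sub_sub_self hi]

theorem exists_restrict_eq {k : ℕ} (x : Fin (k + 1) → X) : ∃ s : ℕ → X, s ∘ Fin.val = x :=
  ⟨fun m => x ⟨m % (k + 1), Nat.mod_lt _ k.succ_pos⟩,
    funext fun q => congrArg x (Fin.ext (Nat.mod_eq_of_lt q.isLt))⟩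

theorem comp_eq_comp_of_restrict {n : ℕ} {g₁ g₂ : (Fin (n + 3) → X) → Fin (n + 2) → X}
    {f₁ f₂ : (Fin (n + 2) → X) → Fin (n + 1) → X} {G₁ G₂ F₁ F₂ : (ℕ → X) → ℕ → X}
    (hg₁ : ∀ s, g₁ (s ∘ Fin.val) = G₁ s ∘ Fin.val)
    (hg₂ : ∀ s, g₂ (s ∘ Fin.val) = G₂ s ∘ Fin.val)
    (hf₁ : ∀ s, f₁ (s ∘ Fin.val) = F₁ s ∘ Fin.val)
    (hf₂ : ∀ s, f₂ (s ∘ Fin.val) = F₂ s ∘ Fin.val)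
    (h : ∀ s, F₁ (G₁ s) = F₂ (G₂ s)) : f₁ ∘ g₁ = f₂ ∘ g₂ := by
  funext x
  obtain ⟨s, rfl⟩ := exists_restrict_eq x
  simp only [Function.comp_apply, hg₁, hg₂, hf₁, hf₂, h]

end Tuples

theorem dLhat_sub_dRhat_comp (R : Type*) [CommRing R] {t : X → X → X → X} (hLN : LeftNormal t)
    (hRN : RightNormal t) {n i j : ℕ} (hij : i ≤ j) (hj : j ≤ n) :
    (dLhat R t n i - dRhat R t n i).comp
        (dLhat R t (n + 1) (j + 1) - dRhat R t (n + 1) (j + 1)) =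
      (dLhat R t n j - dRhat R t n j).comp (dLhat R t (n + 1) i - dRhat R t (n + 1) i) := by
  have hi : i ≤ n := hij.trans hj
  have hj' : j + 1 ≤ n + 1 := Nat.succ_le_succ hj
  have hi' : i ≤ n + 1 := hi.trans n.le_succ
  simp only [dLhat, dRhat, LinearMap.sub_comp, LinearMap.comp_sub, ← Finsupp.lmapDomain_comp]
  rw [comp_eq_comp_of_restrict (dL_restrict hj') (dL_restrict hi') (dL_restrict hi)
      (dL_restrict hj) (leftFace_leftFace hLN hRN hij),
    comp_eq_comp_of_restrict (dR_restrict hj') (dL_restrict hi') (dL_restrict hi)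
      (dR_restrict hj) (leftFace_rightFace hij),
    comp_eq_comp_of_restrict (dL_restrict hj') (dR_restrict hi') (dR_restrict hi)
      (dL_restrict hj) (rightFace_leftFace hLN hRN hij),
    comp_eq_comp_of_restrict (dR_restrict hj') (dR_restrict hi') (dR_restrict hi)
      (dR_restrict hj) (rightFace_rightFace hLN hRN hij)]
  abel

/-- The differential `∂ₙ = Σ_{i=0}^{n} (−1)ⁱ (dᵢⁿ'ᴸ − dᵢⁿ'ᴿ)`
on `Cₙ = R⟨X^{n+2}⟩` satisfies `∂ₙ₋₁ ∘ ∂ₙ = 0` when the ternary operation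
satisfies LN and RN. -/
theorem stmt7 (R : Type*) [CommRing R] (t : X → X → X → X)
    (hLN : ∀ a b c d, t a b (t b c d) = t a (t a b c) (t (t a b c) c d))
    (hRN : ∀ a b c d, t (t a b c) c d = t (t a b (t b c d)) (t b c d) d) :
    ∀ n : ℕ,
      ((∑ i ∈ Finset.range (n + 1),
          ((-1 : R) ^ i) • (dLhat R t n i - dRhat R t n i)).comp
        (∑ i ∈ Finset.range (n + 2),
          ((-1 : R) ^ i) • (dLhat R t (n + 1) i - dRhat R t (n + 1) i))) = 0 := fun n =>
  alternating_sum_comp_alternating_sum_eq_zero _ _ n fun _ _ hij hj =>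
    dLhat_sub_dRhat_comp R hLN hRN hij hj
end

section
/- Let X be a set with ternary operation [ ] satisfying LN and RN, and p, k ≥ 0. Then the full truncated differential ∂ₙ^{(p,k)} = Σ_{i=p}^{n−k} (−1)ⁱ (dᵢⁿ'ᴸ − dᵢⁿ'ᴿ) maps the degenerate submodule Cₙ^{(p,k),D}(X,[ ]) into Cₙ₋₁^{(p,k),D}(X,[ ]), so the degenerate chains form a subcomplex. -/
universe u
variable {X : Type u}

open Fin.NatCast in
/-- The `(p,k)`-degenerate submodule `Cₙ^{(p,k),D}`: spanned by tuples with a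
degenerate consecutive triple at positions `i, i+1, i+2` for some `p ≤ i`
with `i + 2 ≤ n + 1 − k`. -/
noncomputable def Cdeg (R : Type*) [CommRing R] (t : X → X → X → X) (p k n : ℕ) :
    Submodule R ((Fin (n + 2) → X) →₀ R) :=
  Submodule.span R {f | ∃ x : Fin (n + 2) → X, ∃ i : ℕ, p ≤ i ∧ i + 2 + k ≤ n + 1 ∧
    x (↑(i + 1)) = t (x ↑i) (x ↑(i + 1)) (x ↑(i + 2)) ∧ f = Finsupp.single x 1}

/-!
Let `x` be a generator with degenerate triple at positions `j, j+1, j+2`. The substitution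
at `j+1` leaves `x` unchanged, so `dⱼ₊₁ᴸ x = dⱼᴸ x` and `dⱼᴿ x = dⱼ₊₁ᴿ x`, and the terms `j`
and `j+1` of the differential cancel. Every other face is again degenerate: `dᵢᴸ` for `i ≤ j`
and `dᵢᴿ` for `i ≥ j+2` only shift or keep the triple, while `dᵢᴸ` for `i ≥ j+2` and `dᵢᴿ`
for `i < j` substitute into it, and RN resp. LN say that the substituted triple is
degenerate.
-/

open Fin.NatCast

lemma Fin.natCast_ne_natCast {K : ℕ} [NeZero K] {a b : ℕ} (ha : a < K) (hb : b < K)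
    (h : a ≠ b) : (a : Fin K) ≠ (b : Fin K) := by
  rw [Ne, Fin.ext_iff, Fin.val_cast_of_lt ha, Fin.val_cast_of_lt hb]
  exact h

lemma Fin.succ_natCast {N r : ℕ} (h : r < N + 1) :
    (r : Fin (N + 1)).succ = ((r + 1 : ℕ) : Fin (N + 2)) := by
  rw [Fin.ext_iff, Fin.val_succ, Fin.val_cast_of_lt h, Fin.val_cast_of_lt (by omega)]

lemma Fin.castSucc_natCast {N r : ℕ} (h : r < N + 1) :
    (r : Fin (N + 1)).castSucc = (r : Fin (N + 2)) := by
  rw [Fin.ext_iff, Fin.val_castSucc, Fin.val_cast_of_lt h, Fin.val_cast_of_lt (by omega)]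

def IsDegenerateAt (t : X → X → X → X) {m : ℕ} [NeZero m] (x : Fin m → X) (i : ℕ) : Prop :=
  x ↑(i + 1) = t (x ↑i) (x ↑(i + 1)) (x ↑(i + 2))

lemma single_mem_Cdeg (R : Type*) [CommRing R] (t : X → X → X → X) {p k n i : ℕ}
    {y : Fin (n + 2) → X} (hy : IsDegenerateAt t y i) (hp : p ≤ i) (hk : i + 2 + k ≤ n + 1) :
    Finsupp.single y 1 ∈ Cdeg R t p k n :=
  Submodule.subset_span ⟨y, i, hp, hk, hy, rfl⟩

section FaceEntries

variable (t : X → X → X → X) {N : ℕ}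

lemma subst_apply_of_ne {m r : ℕ} (hm : m < N + 2) (hr : r < N + 2) (hne : r ≠ m)
    (x : Fin (N + 2) → X) : subst t N m x ↑r = x ↑r :=
  Function.update_of_ne (Fin.natCast_ne_natCast hr hm hne) _ _

lemma subst_apply_succ (r : ℕ) (x : Fin (N + 2) → X) :
    subst t N (r + 1) x ↑(r + 1) = t (x ↑r) (x ↑(r + 1)) (x ↑(r + 2)) := by
  have hsub : ((r + 1 : ℕ) : Fin (N + 2)) - 1 = r := by
    rw [Nat.cast_succ, add_sub_cancel_right]
  have hadd : ((r + 1 : ℕ) : Fin (N + 2)) + 1 = ↑(r + 2) := by rw [← Nat.cast_succ]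
  rw [subst, Function.update_self, hsub, hadd]

lemma subst_succ_of_isDegenerateAt {j : ℕ} {x : Fin (N + 2) → X}
    (hx : IsDegenerateAt t x j) : subst t N (j + 1) x = x := by
  funext r
  by_cases hr : r = ↑(j + 1)
  · subst hr
    rw [subst_apply_succ]
    exact hx.symm
  · exact Function.update_of_ne hr _ _

lemma dL_apply_of_le {i r : ℕ} (hir : i ≤ r) (hrN : r ≤ N) (x : Fin (N + 2) → X) :
    dL t N i x ↑r = x ↑(r + 1) := by
  induction i generalizing x with
  | zero => exact congrArg x (Fin.succ_natCast (by omega))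
  | succ i ih =>
    rw [dL, ih (by omega), subst_apply_of_ne t (by omega) (by omega) (by omega)]

lemma dL_apply_of_lt {i r : ℕ} (hri : r < i) (hiN : i ≤ N) (x : Fin (N + 2) → X) :
    dL t N i x ↑r = t (x ↑r) (x ↑(r + 1)) (dL t N i x ↑(r + 1)) := by
  induction i generalizing x with
  | zero => omega
  | succ i ih =>
    rcases Nat.lt_or_ge r i with h | h
    · rw [dL, ih h (by omega), subst_apply_of_ne t (by omega) (by omega) (by omega),
        subst_apply_of_ne t (by omega) (by omega) (by omega)]
    · obtain rfl : r = i := by omega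
      rw [dL, dL_apply_of_le t le_rfl (by omega), subst_apply_succ,
        dL_apply_of_le t (by omega) (by omega),
        subst_apply_of_ne t (by omega) (by omega) (by omega)]

lemma dRa_apply_of_le {m r : ℕ} (hm : m ≤ N) (hr : r ≤ N - m) (x : Fin (N + 2) → X) :
    dRa t N m x ↑r = x ↑r := by
  induction m generalizing x with
  | zero => exact congrArg x (Fin.castSucc_natCast (by omega))
  | succ m ih =>
    rw [dRa, ih (by omega) (by omega), subst_apply_of_ne t (by omega) (by omega) (by omega)]

lemma dRa_apply_succ_of_le {m r : ℕ} (hm : m ≤ N) (hr : N - m ≤ r) (hrN : r + 1 ≤ N)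
    (x : Fin (N + 2) → X) :
    dRa t N m x ↑(r + 1) = t (dRa t N m x ↑r) (x ↑(r + 1)) (x ↑(r + 2)) := by
  induction m generalizing x with
  | zero => omega
  | succ m ih =>
    rcases Nat.lt_or_ge r (N - m) with h | h
    · have hr : N - m = r + 1 := by omega
      rw [dRa, hr, dRa_apply_of_le t (r := r + 1) (by omega) (by omega), subst_apply_succ,
        dRa_apply_of_le t (by omega) (by omega),
        subst_apply_of_ne t (by omega) (by omega) (by omega)]
    · rw [dRa, ih (by omega) h, subst_apply_of_ne t (by omega) (by omega) (by omega),
        subst_apply_of_ne t (by omega) (by omega) (by omega)]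

lemma dR_apply_of_le {i r : ℕ} (hi : i ≤ N) (hr : r ≤ i) (x : Fin (N + 2) → X) :
    dR t N i x ↑r = x ↑r :=
  dRa_apply_of_le t (by omega) (by omega) x

lemma dR_apply_succ_of_le {i r : ℕ} (hir : i ≤ r) (hrN : r + 1 ≤ N) (x : Fin (N + 2) → X) :
    dR t N i x ↑(r + 1) = t (dR t N i x ↑r) (x ↑(r + 1)) (x ↑(r + 2)) :=
  dRa_apply_succ_of_le t (by omega) (by omega) hrN x

lemma dL_succ_of_isDegenerateAt {j : ℕ} {x : Fin (N + 2) → X} (hx : IsDegenerateAt t x j) :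
    dL t N (j + 1) x = dL t N j x := by
  rw [dL, subst_succ_of_isDegenerateAt t hx]

lemma dR_succ_of_isDegenerateAt {j : ℕ} (hj : j + 1 ≤ N) {x : Fin (N + 2) → X}
    (hx : IsDegenerateAt t x j) : dR t N (j + 1) x = dR t N j x := by
  rw [dR, dR, show N - j = N - (j + 1) + 1 by omega, dRa,
    show N - (N - (j + 1)) = j + 1 by omega, subst_succ_of_isDegenerateAt t hx]

end FaceEntries

namespace IsDegenerateAt

variable {t : X → X → X → X} {N i j : ℕ} {x : Fin (N + 2) → X}

lemma dL_of_le (hx : IsDegenerateAt t x (j + 1)) (hij : i ≤ j) (hjN : j + 2 ≤ N) :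
    IsDegenerateAt t (dL t N i x) j := by
  unfold IsDegenerateAt at hx ⊢
  rwa [dL_apply_of_le t (by omega) (by omega), dL_apply_of_le t hij (by omega),
    dL_apply_of_le t (by omega) hjN]

lemma dL_of_add_two_le (hRN : ∀ a b c d, t (t a b c) c d = t (t a b (t b c d)) (t b c d) d)
    (hx : IsDegenerateAt t x j) (hji : j + 2 ≤ i) (hiN : i ≤ N) :
    IsDegenerateAt t (dL t N i x) j := by
  unfold IsDegenerateAt at hx ⊢
  have e₁ : dL t N i x ↑(j + 1) = t (x ↑(j + 1)) (x ↑(j + 2)) (dL t N i x ↑(j + 2)) :=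
    dL_apply_of_lt t (by omega) hiN x
  have e₀ : dL t N i x ↑j = t (x ↑j) (x ↑(j + 1)) (dL t N i x ↑(j + 1)) :=
    dL_apply_of_lt t (by omega) hiN x
  rw [e₀, e₁]
  have h := hRN (x ↑j) (x ↑(j + 1)) (x ↑(j + 2)) (dL t N i x ↑(j + 2))
  rwa [← hx] at h

lemma dR_of_le (hLN : ∀ a b c d, t a b (t b c d) = t a (t a b c) (t (t a b c) c d))
    (hx : IsDegenerateAt t x (j + 1)) (hij : i ≤ j) (hjN : j + 2 ≤ N) :
    IsDegenerateAt t (dR t N i x) j := by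
  unfold IsDegenerateAt at hx ⊢
  have e₂ : dR t N i x ↑(j + 2) = t (dR t N i x ↑(j + 1)) (x ↑(j + 2)) (x ↑(j + 3)) :=
    dR_apply_succ_of_le t (by omega) hjN x
  rw [e₂, dR_apply_succ_of_le t hij (by omega)]
  have h := hLN (dR t N i x ↑j) (x ↑(j + 1)) (x ↑(j + 2)) (x ↑(j + 3))
  rwa [← hx] at h

lemma dR_of_add_two_le (hx : IsDegenerateAt t x j) (hji : j + 2 ≤ i) (hiN : i ≤ N) :
    IsDegenerateAt t (dR t N i x) j := by
  unfold IsDegenerateAt at hx ⊢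
  rwa [dR_apply_of_le t hiN (by omega), dR_apply_of_le t hiN (by omega),
    dR_apply_of_le t hiN hji]

end IsDegenerateAt

section Generators

variable (R : Type*) [CommRing R] {t : X → X → X → X} {p k n i j : ℕ} {x : Fin (n + 3) → X}

lemma single_dL_mem_Cdeg (hRN : ∀ a b c d, t (t a b c) c d = t (t a b (t b c d)) (t b c d) d)
    (hx : IsDegenerateAt t x j) (hpj : p ≤ j) (hjk : j + 2 + k ≤ n + 2) (hpi : p ≤ i)
    (hik : i + k ≤ n + 1) (hij : i ≠ j) (hij₁ : i ≠ j + 1) :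
    Finsupp.single (dL t (n + 1) i x) 1 ∈ Cdeg R t p k n := by
  rcases Nat.lt_or_ge i j with h | h
  · obtain ⟨j, rfl⟩ : ∃ j', j = j' + 1 := ⟨j - 1, by omega⟩
    exact single_mem_Cdeg R t (hx.dL_of_le (by omega) (by omega)) (by omega) (by omega)
  · exact single_mem_Cdeg R t (hx.dL_of_add_two_le hRN (by omega) (by omega)) hpj (by omega)

lemma single_dR_mem_Cdeg (hLN : ∀ a b c d, t a b (t b c d) = t a (t a b c) (t (t a b c) c d))
    (hx : IsDegenerateAt t x j) (hpj : p ≤ j) (hjk : j + 2 + k ≤ n + 2) (hpi : p ≤ i)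
    (hik : i + k ≤ n + 1) (hij : i ≠ j) (hij₁ : i ≠ j + 1) :
    Finsupp.single (dR t (n + 1) i x) 1 ∈ Cdeg R t p k n := by
  rcases Nat.lt_or_ge i j with h | h
  · obtain ⟨j, rfl⟩ : ∃ j', j = j' + 1 := ⟨j - 1, by omega⟩
    exact single_mem_Cdeg R t (hx.dR_of_le hLN (by omega) (by omega)) (by omega) (by omega)
  · exact single_mem_Cdeg R t (hx.dR_of_add_two_le (by omega) (by omega)) hpj (by omega)

end Generators

lemma dLhat_sub_dRhat_single (R : Type*) [CommRing R] (t : X → X → X → X) (n i : ℕ)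
    (x : Fin (n + 2) → X) :
    (dLhat R t n i - dRhat R t n i) (Finsupp.single x 1) =
      Finsupp.single (dL t n i x) 1 - Finsupp.single (dR t n i x) 1 := by
  simp only [LinearMap.sub_apply, dLhat, dRhat, Finsupp.lmapDomain_apply,
    Finsupp.mapDomain_single]

lemma Submodule.sum_mem_of_add_eq_zero {R M ι : Type*} [Semiring R] [AddCommMonoid M]
    [Module R M] [DecidableEq ι] {S : Submodule R M} {s : Finset ι} {f : ι → M} {a b : ι}
    (ha : a ∈ s) (hb : b ∈ s) (hab : a ≠ b) (hcancel : f a + f b = 0)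
    (hf : ∀ i ∈ s, i ≠ a → i ≠ b → f i ∈ S) : ∑ i ∈ s, f i ∈ S := by
  rw [← Finset.add_sum_erase s f ha,
    ← Finset.add_sum_erase _ f (Finset.mem_erase.2 ⟨hab.symm, hb⟩), ← add_assoc, hcancel,
    zero_add]
  refine S.sum_mem fun i hi => ?_
  simp only [Finset.mem_erase] at hi
  exact hf i hi.2.2 hi.2.1 hi.1

/-- If the ternary operation satisfies LN and RN, the full
truncated differential `∂ₙ^{(p,k)} = Σ_{i=p}^{n−k} (−1)ⁱ (dᵢⁿ'ᴸ − dᵢⁿ'ᴿ)`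
maps `Cₙ^{(p,k),D}` into `Cₙ₋₁^{(p,k),D}`; the degenerate chains form a
subcomplex. -/
theorem stmt12 (R : Type*) [CommRing R] (t : X → X → X → X)
    (hLN : ∀ a b c d, t a b (t b c d) = t a (t a b c) (t (t a b c) c d))
    (hRN : ∀ a b c d, t (t a b c) c d = t (t a b (t b c d)) (t b c d) d)
    (p k : ℕ) :
    ∀ n : ℕ,
      (Cdeg R t p k (n + 1)).map
          (∑ i ∈ Finset.Icc p (n + 1),
            if i + k ≤ n + 1 then
              ((-1 : R) ^ i) • (dLhat R t (n + 1) i - dRhat R t (n + 1) i)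
            else 0)
        ≤ Cdeg R t p k n := by
  intro n
  rw [Cdeg, Submodule.map_span_le]
  rintro _ ⟨x, j, hpj, hjk, hx, rfl⟩
  rw [LinearMap.sum_apply]
  refine Submodule.sum_mem_of_add_eq_zero (a := j) (b := j + 1)
    (Finset.mem_Icc.2 ⟨hpj, by omega⟩) (Finset.mem_Icc.2 ⟨by omega, by omega⟩) (by omega) ?_
    fun i hi hij hij₁ => ?_
  · rw [if_pos (by omega), if_pos (by omega), LinearMap.smul_apply, LinearMap.smul_apply,
      dLhat_sub_dRhat_single, dLhat_sub_dRhat_single, dL_succ_of_isDegenerateAt t hx,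
      dR_succ_of_isDegenerateAt t (by omega) hx, pow_succ, mul_neg_one, neg_smul,
      add_neg_cancel]
  rw [Finset.mem_Icc] at hi
  split_ifs with hik
  · rw [LinearMap.smul_apply, dLhat_sub_dRhat_single]
    exact Submodule.smul_mem _ _ (sub_mem
      (single_dL_mem_Cdeg R hRN hx hpj hjk hi.1 hik hij hij₁)
      (single_dR_mem_Cdeg R hLN hx hpj hjk hi.1 hik hij hij₁))
  · exact Submodule.zero_mem _
end
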